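/- arXiv:1810.11549 — 8 statements merged into one kernel-verified Lean document; each statement's English description precedes it below -/
import Mathlib

section
/- For any nonzero integers n1, n2, n3 with n1 + n2 - n3 = 0, one has |sqrt(|n1|) + sqrt(|n2|) - sqrt(|n3|)| >= 2/(2 + sqrt 2). -/
lemma key (a b : ℝ) (ha : 1 ≤ a) (hb : 1 ≤ b) :
    2 - Real.sqrt 2 ≤ Real.sqrt a + Real.sqrt b - Real.sqrt (a + b) := by
  have ha0 : (0:ℝ) ≤ a := by linarith
  have hb0 : (0:ℝ) ≤ b := by linarith
  have hx : 1 ≤ Real.sqrt a := by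
    rw [show (1:ℝ) = Real.sqrt 1 by simp]; exact Real.sqrt_le_sqrt ha
  have hy : 1 ≤ Real.sqrt b := by
    rw [show (1:ℝ) = Real.sqrt 1 by simp]; exact Real.sqrt_le_sqrt hb
  have hz0 : 0 ≤ Real.sqrt (a + b) := Real.sqrt_nonneg _
  have hzz : Real.sqrt (a+b) ^ 2 = Real.sqrt a ^ 2 + Real.sqrt b ^ 2 := by
    rw [Real.sq_sqrt ha0, Real.sq_sqrt hb0, Real.sq_sqrt (by linarith)]
  have hs : Real.sqrt 2 ^ 2 = 2 := Real.sq_sqrt (by norm_num)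
  have hs1 : 1 ≤ Real.sqrt 2 := by
    rw [show (1:ℝ) = Real.sqrt 1 by simp]; exact Real.sqrt_le_sqrt (by norm_num)
  set x := Real.sqrt a; set y := Real.sqrt b; set z := Real.sqrt (a+b)
  set s := Real.sqrt 2
  nlinarith [sq_nonneg (x - y), sq_nonneg (x + y - z), sq_nonneg (x + y - s),
    sq_nonneg (z - s), mul_nonneg (sub_nonneg.2 hx) (sub_nonneg.2 hy),
    mul_nonneg hz0 (sub_nonneg.2 hs1)]

theorem stmt0 (n1 n2 n3 : ℤ) (h1 : n1 ≠ 0) (h2 : n2 ≠ 0) (h3 : n3 ≠ 0)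
    (hmom : n1 + n2 - n3 = 0) :
    2 / (2 + Real.sqrt 2) ≤
      abs (Real.sqrt |(n1 : ℝ)| + Real.sqrt |(n2 : ℝ)| - Real.sqrt |(n3 : ℝ)|) := by
  have hs1 : 1 ≤ Real.sqrt 2 := by
    rw [show (1:ℝ) = Real.sqrt 1 by simp]; exact Real.sqrt_le_sqrt (by norm_num)
  have hs : Real.sqrt 2 ^ 2 = 2 := Real.sq_sqrt (by norm_num)
  have heq : 2 / (2 + Real.sqrt 2) = 2 - Real.sqrt 2 := by
    rw [div_eq_iff (by linarith)]; nlinarith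
  rw [heq]
  have hcases : n3.natAbs = n1.natAbs + n2.natAbs ∨
      n1.natAbs = n2.natAbs + n3.natAbs ∨ n2.natAbs = n1.natAbs + n3.natAbs := by omega
  have e1 : |(n1:ℝ)| = (n1.natAbs : ℝ) := by push_cast [Nat.cast_natAbs]; ring
  have e2 : |(n2:ℝ)| = (n2.natAbs : ℝ) := by push_cast [Nat.cast_natAbs]; ring
  have e3 : |(n3:ℝ)| = (n3.natAbs : ℝ) := by push_cast [Nat.cast_natAbs]; ring
  rw [e1, e2, e3]
  have g1 : (1:ℝ) ≤ (n1.natAbs : ℝ) := by exact_mod_cast Nat.one_le_iff_ne_zero.2 (by simpa using h1)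
  have g2 : (1:ℝ) ≤ (n2.natAbs : ℝ) := by exact_mod_cast Nat.one_le_iff_ne_zero.2 (by simpa using h2)
  have g3 : (1:ℝ) ≤ (n3.natAbs : ℝ) := by exact_mod_cast Nat.one_le_iff_ne_zero.2 (by simpa using h3)
  set A := (n1.natAbs : ℝ); set B := (n2.natAbs : ℝ); set C := (n3.natAbs : ℝ)
  have habs : ∀ t : ℝ, t ≤ |t| := fun t => le_abs_self t
  rcases hcases with h | h | h
  · have hC : C = A + B := by unfold A B C; exact_mod_cast h
    calc 2 - Real.sqrt 2 ≤ Real.sqrt A + Real.sqrt B - Real.sqrt (A + B) := key A B g1 g2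
      _ = Real.sqrt A + Real.sqrt B - Real.sqrt C := by rw [hC]
      _ ≤ _ := le_abs_self _
  · have hA : A = B + C := by unfold A B C; exact_mod_cast h
    have hmono : Real.sqrt C ≤ Real.sqrt A := by
      apply Real.sqrt_le_sqrt; linarith
    have hb1 : 1 ≤ Real.sqrt B := by
      rw [show (1:ℝ) = Real.sqrt 1 by simp]; exact Real.sqrt_le_sqrt g2
    calc 2 - Real.sqrt 2 ≤ Real.sqrt A + Real.sqrt B - Real.sqrt C := by linarith
      _ ≤ _ := le_abs_self _
  · have hB : B = A + C := by unfold A B C; exact_mod_cast h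
    have hmono : Real.sqrt C ≤ Real.sqrt B := by
      apply Real.sqrt_le_sqrt; linarith
    have ha1 : 1 ≤ Real.sqrt A := by
      rw [show (1:ℝ) = Real.sqrt 1 by simp]; exact Real.sqrt_le_sqrt g1
    calc 2 - Real.sqrt 2 ≤ Real.sqrt A + Real.sqrt B - Real.sqrt C := by linarith
      _ ≤ _ := le_abs_self _
end

section
/- There is a constant c > 0 such that for all signs σ, σ' in {+1, -1} and all nonzero integers n1, n2, n3 satisfying n1 + σ n2 + σ' n3 = 0, one has |sqrt(|n1|) + σ sqrt(|n2|) + σ' sqrt(|n3|)| >= c. (Absence of three-wave resonances for the gravity water waves dispersion relation ω(n) = sqrt(|n|).) -/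
lemma key_sqrt (y z : ℝ) (hy : 1 ≤ y) (hz : 1 ≤ z) :
    1/2 ≤ Real.sqrt y + Real.sqrt z - Real.sqrt (y + z) := by
  have hy0 : (0:ℝ) ≤ y := by linarith
  have hz0 : (0:ℝ) ≤ z := by linarith
  have hu : 1 ≤ Real.sqrt y := by
    rw [show (1:ℝ) = Real.sqrt 1 from Real.sqrt_one.symm]
    exact Real.sqrt_le_sqrt hy
  have hv : 1 ≤ Real.sqrt z := by
    rw [show (1:ℝ) = Real.sqrt 1 from Real.sqrt_one.symm]
    exact Real.sqrt_le_sqrt hz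
  have hu2 : Real.sqrt y ^ 2 = y := Real.sq_sqrt hy0
  have hv2 : Real.sqrt z ^ 2 = z := Real.sq_sqrt hz0
  have hw2 : Real.sqrt (y + z) ^ 2 = y + z := Real.sq_sqrt (by linarith)
  have hw0 : 0 ≤ Real.sqrt (y + z) := Real.sqrt_nonneg _
  nlinarith [sq_nonneg (Real.sqrt y - Real.sqrt z),
    sq_nonneg (Real.sqrt y + Real.sqrt z - Real.sqrt (y + z)),
    mul_le_mul hu hv (by linarith) (by linarith)]

lemma main_real (x y z : ℝ) (hx : 1 ≤ x) (hy : 1 ≤ y) (hz : 1 ≤ z)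
    (hrel : x = y + z ∨ y = x + z ∨ z = x + y) (s t : ℝ)
    (hs : s = 1 ∨ s = -1) (ht : t = 1 ∨ t = -1) :
    1/2 ≤ |Real.sqrt x + s * Real.sqrt y + t * Real.sqrt z| := by
  have h1x : 1 ≤ Real.sqrt x := by
    rw [show (1:ℝ) = Real.sqrt 1 from Real.sqrt_one.symm]; exact Real.sqrt_le_sqrt hx
  have h1y : 1 ≤ Real.sqrt y := by
    rw [show (1:ℝ) = Real.sqrt 1 from Real.sqrt_one.symm]; exact Real.sqrt_le_sqrt hy
  have h1z : 1 ≤ Real.sqrt z := by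
    rw [show (1:ℝ) = Real.sqrt 1 from Real.sqrt_one.symm]; exact Real.sqrt_le_sqrt hz
  rcases hrel with rfl | rfl | rfl
  · -- x = y + z
    have hzy : Real.sqrt z ≤ Real.sqrt (y + z) := Real.sqrt_le_sqrt (by linarith)
    have hyy : Real.sqrt y ≤ Real.sqrt (y + z) := Real.sqrt_le_sqrt (by linarith)
    have hk := key_sqrt y z hy hz
    rcases hs with rfl | rfl <;> rcases ht with rfl | rfl
    · exact le_abs.mpr (Or.inl (by linarith))
    · exact le_abs.mpr (Or.inl (by linarith))
    · exact le_abs.mpr (Or.inl (by linarith))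
    · exact le_abs.mpr (Or.inr (by linarith))
  · -- y = x + z
    have hzy : Real.sqrt z ≤ Real.sqrt (x + z) := Real.sqrt_le_sqrt (by linarith)
    have hxy : Real.sqrt x ≤ Real.sqrt (x + z) := Real.sqrt_le_sqrt (by linarith)
    have hk := key_sqrt x z hx hz
    rcases hs with rfl | rfl <;> rcases ht with rfl | rfl
    · exact le_abs.mpr (Or.inl (by linarith))
    · exact le_abs.mpr (Or.inl (by linarith))
    · exact le_abs.mpr (Or.inl (by linarith))
    · exact le_abs.mpr (Or.inr (by linarith))
  · -- z = x + y
    have hxz : Real.sqrt x ≤ Real.sqrt (x + y) := Real.sqrt_le_sqrt (by linarith)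
    have hyz : Real.sqrt y ≤ Real.sqrt (x + y) := Real.sqrt_le_sqrt (by linarith)
    have hk := key_sqrt x y hx hy
    rcases hs with rfl | rfl <;> rcases ht with rfl | rfl
    · exact le_abs.mpr (Or.inl (by linarith))
    · exact le_abs.mpr (Or.inl (by linarith))
    · exact le_abs.mpr (Or.inl (by linarith))
    · exact le_abs.mpr (Or.inr (by linarith))

theorem stmt1 :
    ∃ c : ℝ, 0 < c ∧
      ∀ σ σ' : ℤ, (σ = 1 ∨ σ = -1) → (σ' = 1 ∨ σ' = -1) →
        ∀ n1 n2 n3 : ℤ, n1 ≠ 0 → n2 ≠ 0 → n3 ≠ 0 →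
          n1 + σ * n2 + σ' * n3 = 0 →
          c ≤ abs (Real.sqrt |(n1 : ℝ)| + (σ : ℝ) * Real.sqrt |(n2 : ℝ)|
                + (σ' : ℝ) * Real.sqrt |(n3 : ℝ)|) := by
  refine ⟨1/2, by norm_num, ?_⟩
  intro σ σ' hσ hσ' n1 n2 n3 h1 h2 h3 hmom
  have hrelZ : |n1| = |n2| + |n3| ∨ |n2| = |n1| + |n3| ∨ |n3| = |n1| + |n2| := by
    rw [Int.abs_eq_natAbs, Int.abs_eq_natAbs, Int.abs_eq_natAbs]
    rcases hσ with rfl | rfl <;> rcases hσ' with rfl | rfl <;> omega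
  have c1 : (1:ℝ) ≤ |(n1:ℝ)| := by
    rw [← Int.cast_abs]; exact_mod_cast Int.one_le_abs h1
  have c2 : (1:ℝ) ≤ |(n2:ℝ)| := by
    rw [← Int.cast_abs]; exact_mod_cast Int.one_le_abs h2
  have c3 : (1:ℝ) ≤ |(n3:ℝ)| := by
    rw [← Int.cast_abs]; exact_mod_cast Int.one_le_abs h3
  have hrelR : |(n1:ℝ)| = |(n2:ℝ)| + |(n3:ℝ)| ∨ |(n2:ℝ)| = |(n1:ℝ)| + |(n3:ℝ)|
      ∨ |(n3:ℝ)| = |(n1:ℝ)| + |(n2:ℝ)| := by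
    rcases hrelZ with h | h | h
    · left; rw [← Int.cast_abs, ← Int.cast_abs, ← Int.cast_abs]; exact_mod_cast h
    · right; left; rw [← Int.cast_abs, ← Int.cast_abs, ← Int.cast_abs]; exact_mod_cast h
    · right; right; rw [← Int.cast_abs, ← Int.cast_abs, ← Int.cast_abs]; exact_mod_cast h
  have hsR : (σ:ℝ) = 1 ∨ (σ:ℝ) = -1 := by
    rcases hσ with rfl | rfl <;> simp
  have htR : (σ':ℝ) = 1 ∨ (σ':ℝ) = -1 := by
    rcases hσ' with rfl | rfl <;> simp
  exact main_real _ _ _ c1 c2 c3 hrelR _ _ hsR htR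
end

section
/- There exist constants c > 0 and N0 > 0 such that for all signs σ, σ', σ'' in {+1, -1} and all nonzero integers n1, n2, n3, n4 satisfying n1 + σ n2 + σ' n3 + σ'' n4 = 0 and sqrt(|n1|) + σ sqrt(|n2|) + σ' sqrt(|n3|) + σ'' sqrt(|n4|) ≠ 0, one has |sqrt(|n1|) + σ sqrt(|n2|) + σ' sqrt(|n3|) + σ'' sqrt(|n4|)| >= c · max(|n1|,|n2|,|n3|,|n4|)^(−N0). -/
set_option maxHeartbeats 1000000

private lemma sign_ids (e2 e3 e4 s1 s2 s3 s4 : ℝ)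
    (h2 : e2 = 1 ∨ e2 = -1) (h3 : e3 = 1 ∨ e3 = -1) (h4 : e4 = 1 ∨ e4 = -1) :
    (s1 + e2 * s2 + e3 * s3 + e4 * s4) * (s1 + e2 * s2 - e3 * s3 - e4 * s4)
      = (s1 ^ 2 + s2 ^ 2 - s3 ^ 2 - s4 ^ 2) + 2 * e2 * (s1 * s2) - 2 * (e3 * e4) * (s3 * s4)
    ∧ (s1 + e2 * s2 + e3 * s3 + e4 * s4) * (s1 + e2 * s2 - e3 * s3 - e4 * s4)
        * ((s1 ^ 2 + s2 ^ 2 - s3 ^ 2 - s4 ^ 2) - 2 * e2 * (s1 * s2) + 2 * (e3 * e4) * (s3 * s4))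
      = ((s1 ^ 2 + s2 ^ 2 - s3 ^ 2 - s4 ^ 2) ^ 2 - 4 * s1 ^ 2 * s2 ^ 2 - 4 * s3 ^ 2 * s4 ^ 2)
          + 8 * (e2 * e3 * e4) * (s1 * s2 * s3 * s4)
    ∧ (s1 + e2 * s2 + e3 * s3 + e4 * s4) * (s1 + e2 * s2 - e3 * s3 - e4 * s4)
        * ((s1 ^ 2 + s2 ^ 2 - s3 ^ 2 - s4 ^ 2) - 2 * e2 * (s1 * s2) + 2 * (e3 * e4) * (s3 * s4))
        * (((s1 ^ 2 + s2 ^ 2 - s3 ^ 2 - s4 ^ 2) ^ 2 - 4 * s1 ^ 2 * s2 ^ 2 - 4 * s3 ^ 2 * s4 ^ 2)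
            - 8 * (e2 * e3 * e4) * (s1 * s2 * s3 * s4))
      = ((s1 ^ 2 + s2 ^ 2 - s3 ^ 2 - s4 ^ 2) ^ 2 - 4 * s1 ^ 2 * s2 ^ 2 - 4 * s3 ^ 2 * s4 ^ 2) ^ 2
          - 64 * (s1 ^ 2 * s2 ^ 2 * s3 ^ 2 * s4 ^ 2) := by
  rcases h2 with rfl | rfl <;> rcases h3 with rfl | rfl <;> rcases h4 with rfl | rfl <;>
    exact ⟨by ring, by ring, by ring⟩

private lemma sign_bd {e x b : ℝ} (he : e = 1 ∨ e = -1) (hx : 0 ≤ x) (hb : x ≤ b) :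
    -b ≤ e * x ∧ e * x ≤ b := by
  rcases he with rfl | rfl <;> constructor <;> linarith

private lemma main_est (e2 e3 e4 : ℝ)
    (h2 : e2 = 1 ∨ e2 = -1) (h3 : e3 = 1 ∨ e3 = -1) (h4 : e4 = 1 ∨ e4 = -1)
    (n1 n2 n3 n4 : ℤ) (hn1 : n1 ≠ 0) (hn2 : n2 ≠ 0) (hn3 : n3 ≠ 0) (hn4 : n4 ≠ 0)
    (hS : Real.sqrt |(n1 : ℝ)| + e2 * Real.sqrt |(n2 : ℝ)|
        + e3 * Real.sqrt |(n3 : ℝ)| + e4 * Real.sqrt |(n4 : ℝ)| ≠ 0) :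
    (1/1024 : ℝ) * ((max |n1| (max |n2| (max |n3| |n4|)) : ℤ) : ℝ) ^ (-(7:ℝ)) ≤
      abs (Real.sqrt |(n1 : ℝ)| + e2 * Real.sqrt |(n2 : ℝ)|
        + e3 * Real.sqrt |(n3 : ℝ)| + e4 * Real.sqrt |(n4 : ℝ)|) := by
  have habs1 : (1:ℝ) ≤ |(n1 : ℝ)| := by
    rw [← Int.cast_abs]; exact_mod_cast Int.one_le_abs hn1
  have habs2 : (1:ℝ) ≤ |(n2 : ℝ)| := by
    rw [← Int.cast_abs]; exact_mod_cast Int.one_le_abs hn2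
  have habs3 : (1:ℝ) ≤ |(n3 : ℝ)| := by
    rw [← Int.cast_abs]; exact_mod_cast Int.one_le_abs hn3
  have habs4 : (1:ℝ) ≤ |(n4 : ℝ)| := by
    rw [← Int.cast_abs]; exact_mod_cast Int.one_le_abs hn4
  set Mr : ℝ := ((max |n1| (max |n2| (max |n3| |n4|)) : ℤ) : ℝ) with hMrdef
  have hMr : (1:ℝ) ≤ Mr := by
    rw [hMrdef]
    exact_mod_cast le_trans (Int.one_le_abs hn1) (le_max_left _ _)
  have ha1M : |(n1 : ℝ)| ≤ Mr := by
    rw [hMrdef, ← Int.cast_abs]; exact_mod_cast le_max_left _ _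
  have ha2M : |(n2 : ℝ)| ≤ Mr := by
    rw [hMrdef, ← Int.cast_abs]
    exact_mod_cast le_trans (le_max_left _ (max |n3| |n4|)) (le_max_right _ _)
  have ha3M : |(n3 : ℝ)| ≤ Mr := by
    rw [hMrdef, ← Int.cast_abs]
    exact_mod_cast le_trans (le_trans (le_max_left _ |n4|) (le_max_right |n2| _)) (le_max_right _ _)
  have ha4M : |(n4 : ℝ)| ≤ Mr := by
    rw [hMrdef, ← Int.cast_abs]
    exact_mod_cast le_trans (le_trans (le_max_right |n3| _) (le_max_right |n2| _)) (le_max_right _ _)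
  set s1 : ℝ := Real.sqrt |(n1 : ℝ)| with hs1def
  set s2 : ℝ := Real.sqrt |(n2 : ℝ)| with hs2def
  set s3 : ℝ := Real.sqrt |(n3 : ℝ)| with hs3def
  set s4 : ℝ := Real.sqrt |(n4 : ℝ)| with hs4def
  have hs1sq : s1 ^ 2 = |(n1 : ℝ)| := Real.sq_sqrt (abs_nonneg _)
  have hs2sq : s2 ^ 2 = |(n2 : ℝ)| := Real.sq_sqrt (abs_nonneg _)
  have hs3sq : s3 ^ 2 = |(n3 : ℝ)| := Real.sq_sqrt (abs_nonneg _)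
  have hs4sq : s4 ^ 2 = |(n4 : ℝ)| := Real.sq_sqrt (abs_nonneg _)
  have hs1n : 0 ≤ s1 := Real.sqrt_nonneg _
  have hs2n : 0 ≤ s2 := Real.sqrt_nonneg _
  have hs3n : 0 ≤ s3 := Real.sqrt_nonneg _
  have hs4n : 0 ≤ s4 := Real.sqrt_nonneg _
  have hs1g : 1 ≤ s1 := Real.one_le_sqrt.2 habs1
  have hs2g : 1 ≤ s2 := Real.one_le_sqrt.2 habs2
  have hs3g : 1 ≤ s3 := Real.one_le_sqrt.2 habs3
  have hs4g : 1 ≤ s4 := Real.one_le_sqrt.2 habs4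
  have hsqM : Real.sqrt Mr ≤ Mr := by
    calc Real.sqrt Mr ≤ Real.sqrt (Mr * Mr) :=
          Real.sqrt_le_sqrt (le_mul_of_one_le_left (by linarith) hMr)
      _ = Mr := Real.sqrt_mul_self (by linarith)
  have hs1m : s1 ≤ Real.sqrt Mr := Real.sqrt_le_sqrt ha1M
  have hs2m : s2 ≤ Real.sqrt Mr := Real.sqrt_le_sqrt ha2M
  have hs3m : s3 ≤ Real.sqrt Mr := Real.sqrt_le_sqrt ha3M
  have hs4m : s4 ≤ Real.sqrt Mr := Real.sqrt_le_sqrt ha4M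
  have hs1l : s1 ≤ Mr := le_trans hs1m hsqM
  have hs2l : s2 ≤ Mr := le_trans hs2m hsqM
  have hs3l : s3 ≤ Mr := le_trans hs3m hsqM
  have hs4l : s4 ≤ Mr := le_trans hs4m hsqM
  have hPle : s1 * s2 ≤ Mr := by
    calc s1 * s2 ≤ Real.sqrt Mr * Real.sqrt Mr :=
          mul_le_mul hs1m hs2m hs2n (Real.sqrt_nonneg _)
      _ = Mr := Real.mul_self_sqrt (by linarith)
  have hQle : s3 * s4 ≤ Mr := by
    calc s3 * s4 ≤ Real.sqrt Mr * Real.sqrt Mr :=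
          mul_le_mul hs3m hs4m hs4n (Real.sqrt_nonneg _)
      _ = Mr := Real.mul_self_sqrt (by linarith)
  have hP1 : 1 ≤ s1 * s2 := by
    calc (1:ℝ) = 1 * 1 := by norm_num
      _ ≤ s1 * s2 := mul_le_mul hs1g hs2g zero_le_one (by linarith)
  have hQ1 : 1 ≤ s3 * s4 := by
    calc (1:ℝ) = 1 * 1 := by norm_num
      _ ≤ s3 * s4 := mul_le_mul hs3g hs4g zero_le_one (by linarith)
  have hPQ1 : 1 ≤ s1 * s2 * (s3 * s4) := by
    calc (1:ℝ) = 1 * 1 := by norm_num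
      _ ≤ s1 * s2 * (s3 * s4) := mul_le_mul hP1 hQ1 zero_le_one (by linarith)
  obtain ⟨id1, id2, id3⟩ := sign_ids e2 e3 e4 s1 s2 s3 s4 h2 h3 h4
  set W : ℝ := (s1 ^ 2 + s2 ^ 2 - s3 ^ 2 - s4 ^ 2) ^ 2 - 4 * s1 ^ 2 * s2 ^ 2 - 4 * s3 ^ 2 * s4 ^ 2
    with hWdef
  set S : ℝ := s1 + e2 * s2 + e3 * s3 + e4 * s4 with hSdef
  set T : ℝ := s1 + e2 * s2 - e3 * s3 - e4 * s4 with hTdef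
  set U : ℝ := (s1 ^ 2 + s2 ^ 2 - s3 ^ 2 - s4 ^ 2) - 2 * e2 * (s1 * s2) + 2 * (e3 * e4) * (s3 * s4)
    with hUdef
  set Vv : ℝ := W - 8 * (e2 * e3 * e4) * (s1 * s2 * s3 * s4) with hVdef
  have he34 : e3 * e4 = 1 ∨ e3 * e4 = -1 := by
    rcases h3 with rfl | rfl <;> rcases h4 with rfl | rfl <;> norm_num
  have he234 : e2 * e3 * e4 = 1 ∨ e2 * e3 * e4 = -1 := by
    rcases h2 with rfl | rfl <;> rcases h3 with rfl | rfl <;> rcases h4 with rfl | rfl <;> norm_num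
  -- bounds
  have hmub : s1 ^ 2 + s2 ^ 2 - s3 ^ 2 - s4 ^ 2 ≤ 2 * Mr := by
    rw [hs1sq, hs2sq, hs3sq, hs4sq]; linarith
  have hmlb : -(2 * Mr) ≤ s1 ^ 2 + s2 ^ 2 - s3 ^ 2 - s4 ^ 2 := by
    rw [hs1sq, hs2sq, hs3sq, hs4sq]; linarith
  obtain ⟨b2l, b2u⟩ := sign_bd h2 hs2n hs2l
  obtain ⟨b3l, b3u⟩ := sign_bd h3 hs3n hs3l
  obtain ⟨b4l, b4u⟩ := sign_bd h4 hs4n hs4l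
  have hTb : |T| ≤ 4 * Mr := by
    rw [abs_le, hTdef]; constructor <;> linarith
  obtain ⟨bPl, bPu⟩ := sign_bd h2 (mul_nonneg hs1n hs2n) hPle
  obtain ⟨bQl, bQu⟩ := sign_bd he34 (mul_nonneg hs3n hs4n) hQle
  have hM12 : Mr ≤ Mr ^ 2 := by
    calc Mr = Mr * 1 := by ring
      _ ≤ Mr * Mr := mul_le_mul_of_nonneg_left hMr (by linarith)
      _ = Mr ^ 2 := by ring
  have hUb : |U| ≤ 8 * Mr ^ 2 := by
    rw [abs_le, hUdef]; constructor <;> linarith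
  have hm2 : (s1 ^ 2 + s2 ^ 2 - s3 ^ 2 - s4 ^ 2) ^ 2 ≤ (2 * Mr) ^ 2 := sq_le_sq' hmlb hmub
  have hp2 : s1 ^ 2 * s2 ^ 2 ≤ Mr ^ 2 := by
    rw [hs1sq, hs2sq]
    calc |(n1 : ℝ)| * |(n2 : ℝ)| ≤ Mr * Mr := mul_le_mul ha1M ha2M (by linarith) (by linarith)
      _ = Mr ^ 2 := by ring
  have hq2 : s3 ^ 2 * s4 ^ 2 ≤ Mr ^ 2 := by
    rw [hs3sq, hs4sq]
    calc |(n3 : ℝ)| * |(n4 : ℝ)| ≤ Mr * Mr := mul_le_mul ha3M ha4M (by linarith) (by linarith)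
      _ = Mr ^ 2 := by ring
  have hps : (0:ℝ) ≤ s1 ^ 2 * s2 ^ 2 := by positivity
  have hqs : (0:ℝ) ≤ s3 ^ 2 * s4 ^ 2 := by positivity
  have hW1 : W ≤ 4 * Mr ^ 2 := by
    rw [hWdef]; linarith only [hm2, hps, hqs]
  have hW2 : -(8 * Mr ^ 2) ≤ W := by
    rw [hWdef]; linarith only [sq_nonneg (s1 ^ 2 + s2 ^ 2 - s3 ^ 2 - s4 ^ 2), hp2, hq2]
  have hPQb : s1 * s2 * s3 * s4 ≤ Mr ^ 2 := by
    calc s1 * s2 * s3 * s4 = s1 * s2 * (s3 * s4) := by ring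
      _ ≤ Mr * Mr := mul_le_mul hPle hQle (mul_nonneg hs3n hs4n) (by linarith)
      _ = Mr ^ 2 := by ring
  obtain ⟨bRl, bRu⟩ := sign_bd he234 (show (0:ℝ) ≤ s1 * s2 * s3 * s4 by positivity) hPQb
  have hVb : |Vv| ≤ 32 * Mr ^ 2 := by
    rw [abs_le, hVdef]; constructor <;> linarith
  have hSn : 0 ≤ |S| := abs_nonneg S
  have hM07 : (1:ℝ) ≤ Mr ^ 7 := by
    calc (1:ℝ) = 1 ^ 7 := by norm_num
      _ ≤ Mr ^ 7 := pow_le_pow_left₀ (by norm_num) hMr 7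
  have hM17 : Mr ≤ Mr ^ 7 := by
    calc Mr = Mr ^ 1 := (pow_one Mr).symm
      _ ≤ Mr ^ 7 := pow_le_pow_right₀ hMr (by norm_num)
  have hM37 : Mr ^ 3 ≤ Mr ^ 7 := pow_le_pow_right₀ hMr (by norm_num)
  have hM57 : Mr ^ 5 ≤ Mr ^ 7 := pow_le_pow_right₀ hMr (by norm_num)
  -- cast facts
  have hμcast : ((|n1| + |n2| - |n3| - |n4| : ℤ) : ℝ) = s1 ^ 2 + s2 ^ 2 - s3 ^ 2 - s4 ^ 2 := by
    rw [hs1sq, hs2sq, hs3sq, hs4sq]; push_cast; ring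
  set k : ℤ := ((|n1| + |n2| - |n3| - |n4|) ^ 2 - 4 * (|n1| * |n2|) - 4 * (|n3| * |n4|)) ^ 2
      - 64 * (|n1| * |n2| * (|n3| * |n4|)) with hkdef
  have hkcast : (k : ℝ) = W ^ 2 - 64 * (s1 ^ 2 * s2 ^ 2 * s3 ^ 2 * s4 ^ 2) := by
    rw [hkdef, hWdef, hs1sq, hs2sq, hs3sq, hs4sq]; push_cast; ring
  -- reduce goal
  suffices key : 1 ≤ 1024 * (|S| * Mr ^ 7) by
    have hrw : Mr ^ (-(7:ℝ)) = (Mr ^ (7:ℕ))⁻¹ := by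
      rw [Real.rpow_neg (by linarith), show (7:ℝ) = ((7:ℕ):ℝ) by norm_num, Real.rpow_natCast]
    rw [hrw]
    rw [show (1/1024 : ℝ) * (Mr ^ (7:ℕ))⁻¹ = 1 / (1024 * Mr ^ 7) by
      rw [one_div, one_div, mul_inv]]
    rw [div_le_iff₀ (by positivity)]
    linarith [key]
  -- case analysis
  by_cases hT0 : T = 0
  · -- S = 2 (s1 + e2 s2)
    have hSe : S = 2 * (s1 + e2 * s2) := by
      rw [hSdef]; rw [hTdef] at hT0; linarith
    rcases h2 with rfl | rfl
    · have h4le : 4 ≤ |S| := le_trans (by rw [hSe]; linarith) (le_abs_self S)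
      have : 4 * 1 ≤ |S| * Mr ^ 7 := mul_le_mul h4le hM07 zero_le_one hSn
      linarith
    · have hne : |n1| ≠ |n2| := by
        intro h
        apply hS
        have hcast : |(n1 : ℝ)| = |(n2 : ℝ)| := by
          rw [← Int.cast_abs, ← Int.cast_abs]; exact_mod_cast h
        have hs12 : s1 = s2 := by rw [hs1def, hs2def, hcast]
        rw [hTdef] at hT0
        rw [hSdef]
        linarith
      have h1ab : (1:ℝ) ≤ |(|(n1 : ℝ)| - |(n2 : ℝ)|)| := by
        have h' : (1:ℝ) ≤ |((|n1| - |n2| : ℤ) : ℝ)| := by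
          rw [← Int.cast_abs]; exact_mod_cast Int.one_le_abs (sub_ne_zero.2 hne)
        rwa [Int.cast_sub, Int.cast_abs, Int.cast_abs] at h'
      have hmul : S * (s1 + s2) = 2 * (|(n1 : ℝ)| - |(n2 : ℝ)|) := by
        rw [hSe, ← hs1sq, ← hs2sq]; ring
      have h2le : 2 ≤ |S * (s1 + s2)| := by
        rw [hmul, abs_mul, abs_two]; linarith
      rw [abs_mul, abs_of_nonneg (by linarith : (0:ℝ) ≤ s1 + s2)] at h2le
      have hstep : |S| * (s1 + s2) ≤ |S| * (2 * Mr) :=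
        mul_le_mul_of_nonneg_left (by linarith) hSn
      have h1' : 1 ≤ |S| * Mr := by linarith only [h2le, hstep]
      have h2' : |S| * Mr ≤ |S| * Mr ^ 7 := mul_le_mul_of_nonneg_left hM17 hSn
      linarith
  by_cases hU0 : U = 0
  · have hST : S * T = 2 * (s1 ^ 2 + s2 ^ 2 - s3 ^ 2 - s4 ^ 2) := by
      rw [hUdef] at hU0; linarith [id1]
    by_cases hμ : (|n1| + |n2| - |n3| - |n4| : ℤ) = 0
    · exfalso
      have hm0 : s1 ^ 2 + s2 ^ 2 - s3 ^ 2 - s4 ^ 2 = 0 := by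
        rw [← hμcast, hμ]; norm_num
      rw [hm0] at hST
      rcases mul_eq_zero.1 (by linarith : S * T = 0) with h | h
      · exact hS h
      · exact hT0 h
    · have h1m : (1:ℝ) ≤ |s1 ^ 2 + s2 ^ 2 - s3 ^ 2 - s4 ^ 2| := by
        rw [← hμcast, ← Int.cast_abs]
        exact_mod_cast Int.one_le_abs hμ
      have h2le : 2 ≤ |S * T| := by
        rw [hST, abs_mul, abs_two]; linarith
      rw [abs_mul] at h2le
      have hstep : |S| * |T| ≤ |S| * (4 * Mr) := mul_le_mul_of_nonneg_left hTb hSn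
      have h1' : 1 ≤ 2 * (|S| * Mr) := by linarith
      have h2' : |S| * Mr ≤ |S| * Mr ^ 7 := mul_le_mul_of_nonneg_left hM17 hSn
      linarith
  by_cases hV0 : Vv = 0
  · have hSTU : S * T * U = 16 * (e2 * e3 * e4) * (s1 * s2 * s3 * s4) := by
      rw [hVdef] at hV0; linarith [id2]
    have habs16 : |(16:ℝ) * (e2 * e3 * e4)| = 16 := by
      rcases h2 with rfl | rfl <;> rcases h3 with rfl | rfl <;> rcases h4 with rfl | rfl <;>
        norm_num
    have hPQn : (0:ℝ) ≤ s1 * s2 * s3 * s4 := by positivity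
    have h16 : 16 ≤ |S * T * U| := by
      rw [hSTU, show (16:ℝ) * (e2 * e3 * e4) * (s1 * s2 * s3 * s4)
          = ((16:ℝ) * (e2 * e3 * e4)) * (s1 * s2 * s3 * s4) by ring,
        abs_mul, habs16, abs_of_nonneg hPQn]
      linarith [hPQ1]
    rw [abs_mul, abs_mul] at h16
    have d1 : |S| * |T| * |U| ≤ |S| * |T| * (8 * Mr ^ 2) :=
      mul_le_mul_of_nonneg_left hUb (by positivity)
    have d2 : |S| * |T| * (8 * Mr ^ 2) ≤ |S| * (4 * Mr) * (8 * Mr ^ 2) :=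
      mul_le_mul_of_nonneg_right (mul_le_mul_of_nonneg_left hTb hSn) (by positivity)
    have d3 : |S| * Mr ^ 3 ≤ |S| * Mr ^ 7 := mul_le_mul_of_nonneg_left hM37 hSn
    linarith only [h16, d1, d2, d3]
  · -- all factors nonzero, integer k is nonzero
    have hk0 : k ≠ 0 := by
      intro h
      have hK0 : W ^ 2 - 64 * (s1 ^ 2 * s2 ^ 2 * s3 ^ 2 * s4 ^ 2) = 0 := by
        rw [← hkcast, h]; norm_num
      rw [← id3] at hK0
      rcases mul_eq_zero.1 hK0 with h' | h'
      · rcases mul_eq_zero.1 h' with h'' | h''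
        · rcases mul_eq_zero.1 h'' with h''' | h'''
          · exact hS h'''
          · exact hT0 h'''
        · exact hU0 h''
      · exact hV0 h'
    have h1k : (1:ℝ) ≤ |(k : ℝ)| := by
      rw [← Int.cast_abs]; exact_mod_cast Int.one_le_abs hk0
    have hprod : |(k : ℝ)| = |S| * |T| * |U| * |Vv| := by
      rw [hkcast, ← id3, abs_mul, abs_mul, abs_mul]
    rw [hprod] at h1k
    have c1 : |S| * |T| * |U| * |Vv| ≤ |S| * |T| * |U| * (32 * Mr ^ 2) :=
      mul_le_mul_of_nonneg_left hVb (by positivity)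
    have c2 : |S| * |T| * |U| * (32 * Mr ^ 2) ≤ |S| * |T| * (8 * Mr ^ 2) * (32 * Mr ^ 2) :=
      mul_le_mul_of_nonneg_right (mul_le_mul_of_nonneg_left hUb (by positivity)) (by positivity)
    have c3 : |S| * |T| * (8 * Mr ^ 2) * (32 * Mr ^ 2)
        ≤ |S| * (4 * Mr) * (8 * Mr ^ 2) * (32 * Mr ^ 2) :=
      mul_le_mul_of_nonneg_right
        (mul_le_mul_of_nonneg_right (mul_le_mul_of_nonneg_left hTb hSn) (by positivity))
        (by positivity)
    have c4 : |S| * Mr ^ 5 ≤ |S| * Mr ^ 7 := mul_le_mul_of_nonneg_left hM57 hSn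
    linarith only [h1k, c1, c2, c3, c4]

theorem stmt2 :
    ∃ c N0 : ℝ, 0 < c ∧ 0 < N0 ∧
      ∀ σ σ' σ'' : ℤ, (σ = 1 ∨ σ = -1) → (σ' = 1 ∨ σ' = -1) → (σ'' = 1 ∨ σ'' = -1) →
        ∀ n1 n2 n3 n4 : ℤ, n1 ≠ 0 → n2 ≠ 0 → n3 ≠ 0 → n4 ≠ 0 →
          n1 + σ * n2 + σ' * n3 + σ'' * n4 = 0 →
          Real.sqrt |(n1 : ℝ)| + (σ : ℝ) * Real.sqrt |(n2 : ℝ)|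
              + (σ' : ℝ) * Real.sqrt |(n3 : ℝ)| + (σ'' : ℝ) * Real.sqrt |(n4 : ℝ)| ≠ 0 →
          c * ((max |n1| (max |n2| (max |n3| |n4|)) : ℤ) : ℝ) ^ (-N0) ≤
            abs (Real.sqrt |(n1 : ℝ)| + (σ : ℝ) * Real.sqrt |(n2 : ℝ)|
              + (σ' : ℝ) * Real.sqrt |(n3 : ℝ)| + (σ'' : ℝ) * Real.sqrt |(n4 : ℝ)|) := by
  refine ⟨1/1024, 7, by norm_num, by norm_num, ?_⟩
  intro σ σ' σ'' hσ hσ' hσ'' n1 n2 n3 n4 h1 h2 h3 h4 _ hS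
  have e2 : ((σ : ℝ) = 1 ∨ (σ : ℝ) = -1) := by
    rcases hσ with rfl | rfl
    · exact Or.inl (by norm_num)
    · exact Or.inr (by norm_num)
  have e3 : ((σ' : ℝ) = 1 ∨ (σ' : ℝ) = -1) := by
    rcases hσ' with rfl | rfl
    · exact Or.inl (by norm_num)
    · exact Or.inr (by norm_num)
  have e4 : ((σ'' : ℝ) = 1 ∨ (σ'' : ℝ) = -1) := by
    rcases hσ'' with rfl | rfl
    · exact Or.inl (by norm_num)
    · exact Or.inr (by norm_num)
  exact main_est (σ : ℝ) (σ' : ℝ) (σ'' : ℝ) e2 e3 e4 n1 n2 n3 n4 h1 h2 h3 h4 hS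
end

section
/- For every nonzero integer λ and every natural number b ≥ 1, the quadruple n1 = -λ b², n2 = λ (b+1)², n3 = λ (b²+b+1)², n4 = λ b² (b+1)² satisfies both the momentum condition n1 - n2 + n3 - n4 = 0 and the resonance condition sqrt(|n1|) - sqrt(|n2|) + sqrt(|n3|) - sqrt(|n4|) = 0. (Benjamin–Feir resonances.) -/
theorem stmt3 (lam : ℤ) (hlam : lam ≠ 0) (b : ℕ) (hb : 1 ≤ b) :
    (-(lam * (b : ℤ) ^ 2)) - lam * ((b : ℤ) + 1) ^ 2 + lam * ((b : ℤ) ^ 2 + (b : ℤ) + 1) ^ 2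
        - lam * (b : ℤ) ^ 2 * ((b : ℤ) + 1) ^ 2 = 0 ∧
    Real.sqrt |((-(lam * (b : ℤ) ^ 2) : ℤ) : ℝ)|
        - Real.sqrt |((lam * ((b : ℤ) + 1) ^ 2 : ℤ) : ℝ)|
        + Real.sqrt |((lam * ((b : ℤ) ^ 2 + (b : ℤ) + 1) ^ 2 : ℤ) : ℝ)|
        - Real.sqrt |((lam * (b : ℤ) ^ 2 * ((b : ℤ) + 1) ^ 2 : ℤ) : ℝ)| = 0 := by
  constructor
  · ring
  · set B : ℝ := (b : ℝ) with hB
    have hB0 : 0 ≤ B := by positivity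
    have hL : (0:ℝ) ≤ |(lam : ℝ)| := abs_nonneg _
    have key : ∀ k : ℝ, 0 ≤ k →
        Real.sqrt (|(lam : ℝ)| * k ^ 2) = Real.sqrt |(lam : ℝ)| * k := by
      intro k hk
      rw [Real.sqrt_mul hL, Real.sqrt_sq hk]
    have h1 : |((-(lam * (b : ℤ) ^ 2) : ℤ) : ℝ)| = |(lam : ℝ)| * B ^ 2 := by
      push_cast; rw [abs_neg, abs_mul, abs_pow, abs_of_nonneg hB0]
    have h2 : |((lam * ((b : ℤ) + 1) ^ 2 : ℤ) : ℝ)| = |(lam : ℝ)| * (B + 1) ^ 2 := by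
      push_cast
      rw [abs_mul, abs_pow, abs_of_nonneg (by positivity : (0:ℝ) ≤ B + 1)]
    have h3 : |((lam * ((b : ℤ) ^ 2 + (b : ℤ) + 1) ^ 2 : ℤ) : ℝ)|
        = |(lam : ℝ)| * (B ^ 2 + B + 1) ^ 2 := by
      push_cast
      rw [abs_mul, abs_pow, abs_of_nonneg (by positivity : (0:ℝ) ≤ B ^ 2 + B + 1)]
    have h4 : |((lam * (b : ℤ) ^ 2 * ((b : ℤ) + 1) ^ 2 : ℤ) : ℝ)|
        = |(lam : ℝ)| * (B * (B + 1)) ^ 2 := by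
      push_cast
      rw [abs_mul, abs_mul, abs_pow, abs_pow, abs_of_nonneg hB0,
        abs_of_nonneg (by positivity : (0:ℝ) ≤ B + 1)]
      ring
    rw [h1, h2, h3, h4, key B hB0, key (B + 1) (by positivity),
      key (B ^ 2 + B + 1) (by positivity), key (B * (B + 1)) (by positivity)]
    ring
end

section
/- Let n1 > n2 ≥ n4 > n3 > 0 be positive integers with n1 - n2 + n3 - n4 = 0 and n1·n3 ≠ n2·n4. Then |sqrt(n1) - sqrt(n2) + sqrt(n3) - sqrt(n4)| ≥ 2 / ((sqrt(n1·n3) + sqrt(n2·n4)) · (sqrt(n1)+sqrt(n2)+sqrt(n3)+sqrt(n4))). -/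
theorem stmt4 (n1 n2 n3 n4 : ℤ) (h3pos : 0 < n3) (h34 : n3 < n4) (h42 : n4 ≤ n2) (h21 : n2 < n1)
    (hmom : n1 - n2 + n3 - n4 = 0) (hne : n1 * n3 ≠ n2 * n4) :
    2 / ((Real.sqrt ((n1 : ℝ) * (n3 : ℝ)) + Real.sqrt ((n2 : ℝ) * (n4 : ℝ))) *
          (Real.sqrt (n1 : ℝ) + Real.sqrt (n2 : ℝ) + Real.sqrt (n3 : ℝ) + Real.sqrt (n4 : ℝ))) ≤
      abs (Real.sqrt (n1 : ℝ) - Real.sqrt (n2 : ℝ) + Real.sqrt (n3 : ℝ) - Real.sqrt (n4 : ℝ)) := by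
  have h4pos : 0 < n4 := h3pos.trans h34
  have h2pos : 0 < n2 := lt_of_lt_of_le h4pos h42
  have h1pos : 0 < n1 := h2pos.trans h21
  have hr1 : (0:ℝ) < (n1:ℝ) := by exact_mod_cast h1pos
  have hr2 : (0:ℝ) < (n2:ℝ) := by exact_mod_cast h2pos
  have hr3 : (0:ℝ) < (n3:ℝ) := by exact_mod_cast h3pos
  have hr4 : (0:ℝ) < (n4:ℝ) := by exact_mod_cast h4pos
  set a := Real.sqrt (n1:ℝ) with hadef
  set b := Real.sqrt (n2:ℝ) with hbdef
  set c := Real.sqrt (n3:ℝ) with hcdef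
  set d := Real.sqrt (n4:ℝ) with hddef
  have ha : 0 < a := Real.sqrt_pos.mpr hr1
  have hb : 0 < b := Real.sqrt_pos.mpr hr2
  have hc : 0 < c := Real.sqrt_pos.mpr hr3
  have hd : 0 < d := Real.sqrt_pos.mpr hr4
  have ha2 : a ^ 2 = (n1:ℝ) := Real.sq_sqrt hr1.le
  have hb2 : b ^ 2 = (n2:ℝ) := Real.sq_sqrt hr2.le
  have hc2 : c ^ 2 = (n3:ℝ) := Real.sq_sqrt hr3.le
  have hd2 : d ^ 2 = (n4:ℝ) := Real.sq_sqrt hr4.le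
  have hm13 : Real.sqrt ((n1:ℝ) * (n3:ℝ)) = a * c := Real.sqrt_mul hr1.le _
  have hm24 : Real.sqrt ((n2:ℝ) * (n4:ℝ)) = b * d := Real.sqrt_mul hr2.le _
  rw [hm13, hm24]
  have hm : (n1:ℝ) - n2 + n3 - n4 = 0 := by exact_mod_cast hmom
  have hS : 0 < a + b + c + d := by positivity
  have hT : 0 < a * c + b * d := by positivity
  have key : (a - b + c - d) * ((a + b + c + d) * (a * c + b * d)) =
      2 * ((n1:ℝ) * n3 - n2 * n4) := by
    linear_combination (a*c + b*d + 2*c^2) * ha2 - (a*c + b*d + 2*d^2) * hb2 +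
      (a*c + b*d + 2*(n1:ℝ)) * hc2 - (a*c + b*d + 2*(n2:ℝ)) * hd2 + (a*c + b*d) * hm
  rw [div_le_iff₀ (by positivity)]
  have habs : |a - b + c - d| * ((a*c + b*d) * (a + b + c + d)) =
      2 * |(n1:ℝ) * n3 - n2 * n4| := by
    calc |a - b + c - d| * ((a*c + b*d) * (a + b + c + d))
        = |(a - b + c - d) * ((a + b + c + d) * (a * c + b * d))| := by
          rw [abs_mul, abs_of_pos (by positivity : (0:ℝ) < (a+b+c+d)*(a*c+b*d))]; ring
      _ = |2 * ((n1:ℝ) * n3 - n2 * n4)| := by rw [key]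
      _ = 2 * |(n1:ℝ) * n3 - n2 * n4| := by rw [abs_mul, abs_two]
  rw [habs]
  have h1 : (1:ℝ) ≤ |(n1:ℝ) * n3 - n2 * n4| := by
    have h0 : (1:ℤ) ≤ |n1 * n3 - n2 * n4| :=
      Int.one_le_abs (sub_ne_zero.mpr hne)
    calc (1:ℝ) ≤ ((|n1 * n3 - n2 * n4| : ℤ) : ℝ) := by exact_mod_cast h0
      _ = |(n1:ℝ) * n3 - n2 * n4| := by push_cast; ring_nf
  linarith
end

section
/- Let n1, n2, n3, n4 be integers with n1 > n2 > n4 > 0 > n3, n4 > |n3|, and satisfying the momentum condition n1 - n2 + n3 - n4 = 0 (i.e., n1 - n2 = n4 - |n3|). Suppose also n2·n4 > n1·|n3| and (n3² + n1·|n3| - n2·n4)² ≠ 4·|n3|³·n1. Then sqrt(n1) - sqrt(n2) + sqrt(|n3|) - sqrt(n4) ≠ 0. -/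
theorem stmt5 (n1 n2 n3 n4 : ℤ) (h21 : n2 < n1) (h42 : n4 < n2) (h4pos : 0 < n4) (h3neg : n3 < 0)
    (h34 : |n3| < n4) (hmom : n1 - n2 + n3 - n4 = 0)
    (hprod : n1 * |n3| < n2 * n4)
    (hA : (n3 ^ 2 + n1 * |n3| - n2 * n4) ^ 2 ≠ 4 * |n3| ^ 3 * n1) :
    Real.sqrt (n1 : ℝ) - Real.sqrt (n2 : ℝ) + Real.sqrt |(n3 : ℝ)| - Real.sqrt (n4 : ℝ) ≠ 0 := by
  intro h
  have habsZ : |n3| = -n3 := abs_of_neg h3neg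
  have hmR : |(n3 : ℝ)| = ((-n3 : ℤ) : ℝ) := by
    rw [abs_of_neg (by exact_mod_cast h3neg : (n3:ℝ) < 0)]
    push_cast; ring
  have h1 : (0:ℝ) ≤ (n1:ℝ) := by exact_mod_cast (by omega : (0:ℤ) ≤ n1)
  have h2 : (0:ℝ) ≤ (n2:ℝ) := by exact_mod_cast (by omega : (0:ℤ) ≤ n2)
  have h4 : (0:ℝ) ≤ (n4:ℝ) := by exact_mod_cast (by omega : (0:ℤ) ≤ n4)
  have h3 : (0:ℝ) ≤ ((-n3:ℤ):ℝ) := by exact_mod_cast (by omega : (0:ℤ) ≤ -n3)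
  set s1 := Real.sqrt (n1:ℝ) with hs1d
  set s2 := Real.sqrt (n2:ℝ) with hs2d
  set s4 := Real.sqrt (n4:ℝ) with hs4d
  rw [hmR] at h
  set s3 := Real.sqrt ((-n3:ℤ):ℝ) with hs3d
  have hs1 : s1 ^ 2 = (n1:ℝ) := Real.sq_sqrt h1
  have hs2 : s2 ^ 2 = (n2:ℝ) := Real.sq_sqrt h2
  have hs3 : s3 ^ 2 = ((-n3:ℤ):ℝ) := Real.sq_sqrt h3
  have hs4 : s4 ^ 2 = (n4:ℝ) := Real.sq_sqrt h4
  have heq : s1 + s3 = s2 + s4 := by linarith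
  have hmomR : (n1:ℝ) = (n2:ℝ) + (n4:ℝ) + ((-n3:ℤ):ℝ) := by
    have : n1 = n2 + n4 + (-n3) := by omega
    exact_mod_cast this
  have hsq : (s1 + s3) ^ 2 = (s2 + s4) ^ 2 := by rw [heq]
  have e1 : (n1:ℝ) + 2*(s1*s3) + ((-n3:ℤ):ℝ) = (n2:ℝ) + 2*(s2*s4) + (n4:ℝ) := by
    linear_combination hsq - hs1 - hs3 + hs2 + hs4
  have e2 : s2 * s4 = ((-n3:ℤ):ℝ) + s1 * s3 := by linarith [e1, hmomR]
  have hss : (s1 * s3) ^ 2 = (n1:ℝ) * ((-n3:ℤ):ℝ) := by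
    rw [mul_pow, hs1, hs3]
  have e2sq : (s2 * s4)^2 = (((-n3:ℤ):ℝ) + s1 * s3)^2 := by rw [e2]
  have e3 : 2 * ((-n3:ℤ):ℝ) * (s1 * s3) = (n2:ℝ) * n4 - ((-n3:ℤ):ℝ)^2 - (n1:ℝ) * ((-n3:ℤ):ℝ) := by
    linear_combination -e2sq - hss + hs2 * s4^2 + hs4 * (n2:ℝ)
  have key : (((-n3:ℤ):ℝ)^2 + (n1:ℝ) * ((-n3:ℤ):ℝ) - (n2:ℝ) * n4) ^ 2
      = 4 * ((-n3:ℤ):ℝ)^3 * (n1:ℝ) := by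
    have h5 : (((-n3:ℤ):ℝ)^2 + (n1:ℝ) * ((-n3:ℤ):ℝ) - (n2:ℝ) * n4) = -(2 * ((-n3:ℤ):ℝ) * (s1 * s3)) := by
      linarith [e3]
    rw [h5]
    have : (-(2 * ((-n3:ℤ):ℝ) * (s1 * s3)))^2 = 4 * ((-n3:ℤ):ℝ)^2 * (s1*s3)^2 := by ring
    rw [this, hss]; ring
  have keyZ : ((-n3)^2 + n1 * (-n3) - n2 * n4) ^ 2 = 4 * (-n3)^3 * n1 := by
    exact_mod_cast key
  apply hA
  rw [habsZ]
  linear_combination keyZ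
end

section
/- Let ω : ℤ\{0} → ℝ with ω(n) = sqrt(|n|). Suppose a quadratic monomial vector field coefficient q (indexed by signs σ, σ1, σ2 ∈ {±1} and nonzero integers j, j1, j2 with σ j = σ1 j1 + σ2 j2) satisfies the homological equation q·i(σ ω(j) − σ1 ω(j1) − σ2 ω(j2)) + r = 0 for a given r ∈ ℂ. Then q is uniquely determined: q = −r / (i(σ ω(j) − σ1 ω(j1) − σ2 ω(j2))), and the denominator is nonzero; moreover |q| ≤ |r|·(2+√2)/2. -/
/-- The cubic small divisor `σ ω(j) − σ1 ω(j1) − σ2 ω(j2)` with `ω(n) = √|n|`. -/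
noncomputable def cubicDiv (σ σ1 σ2 j j1 j2 : ℤ) : ℝ :=
  (σ : ℝ) * Real.sqrt |(j : ℝ)| - (σ1 : ℝ) * Real.sqrt |(j1 : ℝ)|
    - (σ2 : ℝ) * Real.sqrt |(j2 : ℝ)|

/-!
The momentum condition forces one of `|j|, |j1|, |j2|` to be the sum of the other two, so up to
order and signs the divisor is `±√(b + c) ± √b ± √c` with `b, c ≥ 1`. The smallest of these in
absolute value is `√b + √c − √(b + c) = 2√(bc) / (√b + √c + √(b + c))`, and bounding the
denominator by `(2 + √2)√(bc)` gives the uniform lower bound `2 / (2 + √2)`. The homological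
equation is then solved by division.
-/

open Real

lemma abs_eq_add_abs_or_of_eq_add {α : Type*} [CommRing α] [LinearOrder α]
    [IsStrictOrderedRing α] {a b c : α} (h : a = b + c) :
    |a| = |b| + |c| ∨ |b| = |a| + |c| ∨ |c| = |a| + |b| := by
  rcases abs_cases a with ⟨ha, _⟩ | ⟨ha, _⟩ <;> rcases abs_cases b with ⟨hb, _⟩ | ⟨hb, _⟩ <;>
    rcases abs_cases c with ⟨hc, _⟩ | ⟨hc, _⟩ <;> rw [ha, hb, hc] <;>
    first
    | exact Or.inl (by linarith)
    | exact Or.inr (Or.inl (by linarith))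
    | exact Or.inr (Or.inr (by linarith))

lemma abs_add_abs_sub_abs_le_abs_add_add {x y z : ℝ} (hy : |y| ≤ |x|) (hz : |z| ≤ |x|) :
    |y| + |z| - |x| ≤ |x + y + z| := by
  rcases abs_cases x with ⟨hx, _⟩ | ⟨hx, _⟩ <;> rcases abs_cases y with ⟨hy', _⟩ | ⟨hy', _⟩ <;>
    rcases abs_cases z with ⟨hz', _⟩ | ⟨hz', _⟩ <;>
    rcases abs_cases (x + y + z) with ⟨hs, _⟩ | ⟨hs, _⟩ <;> linarith

lemma two_div_two_add_sqrt_two_le {B C : ℝ} (hB : 1 ≤ B) (hC : 1 ≤ C) :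
    2 / (2 + √2) ≤ B + C - √(B ^ 2 + C ^ 2) := by
  set A := √(B ^ 2 + C ^ 2)
  have hA : A ^ 2 = B ^ 2 + C ^ 2 := sq_sqrt (by positivity)
  have hB2 : 1 ≤ B ^ 2 := one_le_pow₀ hB
  have hC2 : 1 ≤ C ^ 2 := one_le_pow₀ hC
  have hA_le : A ≤ √2 * (B * C) := by
    refine sqrt_le_left (by positivity) |>.2 ?_
    rw [mul_pow, mul_pow, sq_sqrt zero_le_two]
    nlinarith [mul_nonneg (sub_nonneg.2 hB2) (sub_nonneg.2 hC2)]
  have hsum_le : B + C + A ≤ (2 + √2) * (B * C) := by nlinarith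
  have hprod : (B + C - A) * (B + C + A) = 2 * (B * C) := by linear_combination -hA
  have hgap : 0 ≤ B + C - A := by nlinarith [sqrt_nonneg (B ^ 2 + C ^ 2)]
  rw [div_le_iff₀ (by positivity)]
  nlinarith [mul_le_mul_of_nonneg_left hsum_le hgap, mul_pos (by linarith : (0 : ℝ) < B)
    (by linarith : (0 : ℝ) < C)]

lemma two_div_two_add_sqrt_two_le_abs_add_add_of_sq_eq {x y z : ℝ} (hy : 1 ≤ y ^ 2)
    (hz : 1 ≤ z ^ 2) (h : x ^ 2 = y ^ 2 + z ^ 2) : 2 / (2 + √2) ≤ |x + y + z| := by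
  have hyx : |y| ≤ |x| := sq_le_sq.1 (by nlinarith)
  have hzx : |z| ≤ |x| := sq_le_sq.1 (by nlinarith)
  calc 2 / (2 + √2) ≤ |y| + |z| - √(|y| ^ 2 + |z| ^ 2) :=
        two_div_two_add_sqrt_two_le (one_le_sq_iff_one_le_abs y |>.1 hy)
          (one_le_sq_iff_one_le_abs z |>.1 hz)
    _ = |y| + |z| - |x| := by rw [sq_abs, sq_abs, ← h, sqrt_sq_eq_abs]
    _ ≤ |x + y + z| := abs_add_abs_sub_abs_le_abs_add_add hyx hzx

lemma two_div_two_add_sqrt_two_le_abs_add_add {x y z : ℝ} (hx : 1 ≤ x ^ 2) (hy : 1 ≤ y ^ 2)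
    (hz : 1 ≤ z ^ 2)
    (h : x ^ 2 = y ^ 2 + z ^ 2 ∨ y ^ 2 = x ^ 2 + z ^ 2 ∨ z ^ 2 = x ^ 2 + y ^ 2) :
    2 / (2 + √2) ≤ |x + y + z| := by
  rcases h with h | h | h
  · exact two_div_two_add_sqrt_two_le_abs_add_add_of_sq_eq hy hz h
  · rw [show x + y + z = y + x + z by ring]
    exact two_div_two_add_sqrt_two_le_abs_add_add_of_sq_eq hx hz h
  · rw [show x + y + z = z + x + y by ring]
    exact two_div_two_add_sqrt_two_le_abs_add_add_of_sq_eq hx hy h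

lemma sq_mul_sqrt_abs {s : ℝ} (hs : |s| = 1) (n : ℝ) : (s * √|n|) ^ 2 = |n| := by
  rw [mul_pow, ← sq_abs s, hs, one_pow, one_mul, sq_sqrt (abs_nonneg n)]

lemma two_div_two_add_sqrt_two_le_abs_cubicDiv {σ σ1 σ2 j j1 j2 : ℤ} (hσ : |σ| = 1)
    (hσ1 : |σ1| = 1) (hσ2 : |σ2| = 1) (hj : j ≠ 0) (hj1 : j1 ≠ 0) (hj2 : j2 ≠ 0)
    (hmom : σ * j = σ1 * j1 + σ2 * j2) :
    2 / (2 + √2) ≤ |cubicDiv σ σ1 σ2 j j1 j2| := by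
  have hσ' : |(σ : ℝ)| = 1 := by exact_mod_cast hσ
  have hσ1' : |(σ1 : ℝ)| = 1 := by exact_mod_cast hσ1
  have hσ2' : |(σ2 : ℝ)| = 1 := by exact_mod_cast hσ2
  have hmom' : (σ : ℝ) * j = σ1 * j1 + σ2 * j2 := by exact_mod_cast hmom
  have hsum := abs_eq_add_abs_or_of_eq_add hmom'
  simp only [abs_mul, hσ', hσ1', hσ2', one_mul] at hsum
  have hx := sq_mul_sqrt_abs hσ' j
  have hy : (-(σ1 * √|(j1 : ℝ)|)) ^ 2 = |(j1 : ℝ)| := by rw [neg_sq, sq_mul_sqrt_abs hσ1']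
  have hz : (-(σ2 * √|(j2 : ℝ)|)) ^ 2 = |(j2 : ℝ)| := by rw [neg_sq, sq_mul_sqrt_abs hσ2']
  have hcubic : cubicDiv σ σ1 σ2 j j1 j2
      = σ * √|(j : ℝ)| + -(σ1 * √|(j1 : ℝ)|) + -(σ2 * √|(j2 : ℝ)|) := by
    unfold cubicDiv; ring
  rw [hcubic]
  refine two_div_two_add_sqrt_two_le_abs_add_add ?_ ?_ ?_ (by rwa [hx, hy, hz])
  · rw [hx]; exact_mod_cast Int.one_le_abs hj
  · rw [hy]; exact_mod_cast Int.one_le_abs hj1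
  · rw [hz]; exact_mod_cast Int.one_le_abs hj2

theorem stmt12 (σ σ1 σ2 : ℤ) (hσ : σ = 1 ∨ σ = -1) (hσ1 : σ1 = 1 ∨ σ1 = -1)
    (hσ2 : σ2 = 1 ∨ σ2 = -1)
    (j j1 j2 : ℤ) (hj : j ≠ 0) (hj1 : j1 ≠ 0) (hj2 : j2 ≠ 0)
    (hmom : σ * j = σ1 * j1 + σ2 * j2) (q r : ℂ)
    (heq : q * (Complex.I * (cubicDiv σ σ1 σ2 j j1 j2 : ℂ)) + r = 0) :
    cubicDiv σ σ1 σ2 j j1 j2 ≠ 0 ∧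
    q = -r / (Complex.I * (cubicDiv σ σ1 σ2 j j1 j2 : ℂ)) ∧
    ‖q‖ ≤ ‖r‖ * (2 + Real.sqrt 2) / 2 := by
  set D := cubicDiv σ σ1 σ2 j j1 j2
  have hbound : 2 / (2 + √2) ≤ |D| :=
    two_div_two_add_sqrt_two_le_abs_cubicDiv ((abs_eq zero_le_one).2 hσ)
      ((abs_eq zero_le_one).2 hσ1) ((abs_eq zero_le_one).2 hσ2) hj hj1 hj2 hmom
  have hpos : 0 < 2 / (2 + √2) := by positivity
  have hD : D ≠ 0 := abs_pos.1 (hpos.trans_le hbound)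
  have hq : q = -r / (Complex.I * D) := by
    rw [eq_div_iff (mul_ne_zero Complex.I_ne_zero (Complex.ofReal_ne_zero.2 hD))]
    linear_combination heq
  refine ⟨hD, hq, ?_⟩
  calc ‖q‖ = ‖r‖ / |D| := by
        rw [hq, norm_div, norm_neg, norm_mul, Complex.norm_I, one_mul, Complex.norm_real,
          Real.norm_eq_abs]
    _ ≤ ‖r‖ / (2 / (2 + √2)) := div_le_div_of_nonneg_left (norm_nonneg r) hpos hbound
    _ = ‖r‖ * (2 + √2) / 2 := div_div_eq_mul_div _ _ _
end

section
/- The linear operator ad on quadratic monomials defined by ad(u^{σ1}_{j1} u^{σ2}_{j2} ∂_{u^σ_j}) = i(σ ω(j) − σ1 ω(j1) − σ2 ω(j2)) · u^{σ1}_{j1} u^{σ2}_{j2} ∂_{u^σ_j}, restricted to monomials satisfying the momentum condition σ j = σ1 j1 + σ2 j2 with j, j1, j2 nonzero integers and ω(n) = sqrt(|n|), is injective. -/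
/-- Index of a quadratic monomial vector field `u^{σ1}_{j1} u^{σ2}_{j2} ∂_{u^σ_j}`
satisfying the momentum condition `σ j = σ1 j1 + σ2 j2` with all integers nonzero. -/
structure ResIdx where
  σ : ℤ
  σ1 : ℤ
  σ2 : ℤ
  j : ℤ
  j1 : ℤ
  j2 : ℤ
  hσ : σ = 1 ∨ σ = -1
  hσ1 : σ1 = 1 ∨ σ1 = -1
  hσ2 : σ2 = 1 ∨ σ2 = -1
  hj : j ≠ 0
  hj1 : j1 ≠ 0
  hj2 : j2 ≠ 0
  hmom : σ * j = σ1 * j1 + σ2 * j2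

/-- The eigenvalue `i(σ ω(j) − σ1 ω(j1) − σ2 ω(j2))`, `ω(n) = √|n|`, of the adjoint
operator `ad` on the monomial indexed by `m`. -/
noncomputable def eigenv (m : ResIdx) : ℂ :=
  Complex.I * (((m.σ : ℝ) * Real.sqrt |(m.j : ℝ)| - (m.σ1 : ℝ) * Real.sqrt |(m.j1 : ℝ)|
    - (m.σ2 : ℝ) * Real.sqrt |(m.j2 : ℝ)| : ℝ) : ℂ)

set_option maxHeartbeats 1600000 in
lemma eigenv_ne_zero (m : ResIdx) : eigenv m ≠ 0 := by
  obtain ⟨σ, σ1, σ2, j, j1, j2, hσ, hσ1, hσ2, hj, hj1, hj2, hmom⟩ := m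
  intro hm
  simp only [eigenv] at hm
  have h0 : (σ : ℝ) * Real.sqrt |(j : ℝ)| - (σ1 : ℝ) * Real.sqrt |(j1 : ℝ)|
      - (σ2 : ℝ) * Real.sqrt |(j2 : ℝ)| = 0 := by
    rcases mul_eq_zero.mp hm with h | h
    · exact absurd h Complex.I_ne_zero
    · exact_mod_cast h
  set sa := Real.sqrt |(j : ℝ)| with hsa
  set sb := Real.sqrt |(j1 : ℝ)| with hsb
  set sc := Real.sqrt |(j2 : ℝ)| with hsc
  have ha2 : sa ^ 2 = |(j : ℝ)| := Real.sq_sqrt (abs_nonneg _)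
  have hb2 : sb ^ 2 = |(j1 : ℝ)| := Real.sq_sqrt (abs_nonneg _)
  have hc2 : sc ^ 2 = |(j2 : ℝ)| := Real.sq_sqrt (abs_nonneg _)
  have haZ : (1 : ℝ) ≤ |(j : ℝ)| := by
    have : (1 : ℤ) ≤ |j| := Int.one_le_abs hj
    have : ((1 : ℤ) : ℝ) ≤ ((|j| : ℤ) : ℝ) := by exact_mod_cast this
    simpa using this
  have hbZ : (1 : ℝ) ≤ |(j1 : ℝ)| := by
    have : (1 : ℤ) ≤ |j1| := Int.one_le_abs hj1
    have : ((1 : ℤ) : ℝ) ≤ ((|j1| : ℤ) : ℝ) := by exact_mod_cast this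
    simpa using this
  have hcZ : (1 : ℝ) ≤ |(j2 : ℝ)| := by
    have : (1 : ℤ) ≤ |j2| := Int.one_le_abs hj2
    have : ((1 : ℤ) : ℝ) ≤ ((|j2| : ℤ) : ℝ) := by exact_mod_cast this
    simpa using this
  have ha1 : (1 : ℝ) ≤ sa := by nlinarith [Real.sqrt_nonneg |(j : ℝ)|]
  have hb1 : (1 : ℝ) ≤ sb := by nlinarith [Real.sqrt_nonneg |(j1 : ℝ)|]
  have hc1 : (1 : ℝ) ≤ sc := by nlinarith [Real.sqrt_nonneg |(j2 : ℝ)|]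
  -- triangle inequalities from momentum
  have ta : |j| ≤ |j1| + |j2| := by
    have h1 : |j| = |σ1 * j1 + σ2 * j2| := by
      rw [← hmom, abs_mul]; rcases hσ with rfl | rfl <;> simp
    calc |j| = |σ1 * j1 + σ2 * j2| := h1
      _ ≤ |σ1 * j1| + |σ2 * j2| := abs_add_le _ _
      _ = |j1| + |j2| := by
          rw [abs_mul, abs_mul]
          rcases hσ1 with rfl | rfl <;> rcases hσ2 with rfl | rfl <;> simp
  have tb : |j1| ≤ |j| + |j2| := by
    have hm1 : σ1 * j1 = σ * j - σ2 * j2 := by linarith [hmom]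
    have h1 : |j1| = |σ * j - σ2 * j2| := by
      rw [← hm1, abs_mul]; rcases hσ1 with rfl | rfl <;> simp
    calc |j1| = |σ * j - σ2 * j2| := h1
      _ ≤ |σ * j| + |σ2 * j2| := abs_sub _ _
      _ = |j| + |j2| := by
          rw [abs_mul, abs_mul]
          rcases hσ with rfl | rfl <;> rcases hσ2 with rfl | rfl <;> simp
  have tc : |j2| ≤ |j| + |j1| := by
    have hm1 : σ2 * j2 = σ * j - σ1 * j1 := by linarith [hmom]
    have h1 : |j2| = |σ * j - σ1 * j1| := by
      rw [← hm1, abs_mul]; rcases hσ2 with rfl | rfl <;> simp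
    calc |j2| = |σ * j - σ1 * j1| := h1
      _ ≤ |σ * j| + |σ1 * j1| := abs_sub _ _
      _ = |j| + |j1| := by
          rw [abs_mul, abs_mul]
          rcases hσ with rfl | rfl <;> rcases hσ1 with rfl | rfl <;> simp
  have taR : |(j : ℝ)| ≤ |(j1 : ℝ)| + |(j2 : ℝ)| := by
    have := ta; push_cast [← Int.cast_abs]; exact_mod_cast this
  have tbR : |(j1 : ℝ)| ≤ |(j : ℝ)| + |(j2 : ℝ)| := by
    have := tb; push_cast [← Int.cast_abs]; exact_mod_cast this
  have tcR : |(j2 : ℝ)| ≤ |(j : ℝ)| + |(j1 : ℝ)| := by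
    have := tc; push_cast [← Int.cast_abs]; exact_mod_cast this
  have ea : sa ^ 2 ≤ sb ^ 2 + sc ^ 2 := by rw [ha2, hb2, hc2]; exact taR
  have eb : sb ^ 2 ≤ sa ^ 2 + sc ^ 2 := by rw [ha2, hb2, hc2]; exact tbR
  have ec : sc ^ 2 ≤ sa ^ 2 + sb ^ 2 := by rw [ha2, hb2, hc2]; exact tcR
  rcases hσ with rfl | rfl <;> rcases hσ1 with rfl | rfl <;> rcases hσ2 with rfl | rfl <;>
    push_cast at h0 <;>
    nlinarith [mul_le_mul ha1 hb1 zero_le_one (le_trans zero_le_one ha1),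
      mul_le_mul ha1 hc1 zero_le_one (le_trans zero_le_one ha1),
      mul_le_mul hb1 hc1 zero_le_one (le_trans zero_le_one hb1)]

/-- The diagonal operator `ad`, multiplying the coefficient of each momentum-preserving
quadratic monomial by its eigenvalue, is injective on formal linear combinations. -/
theorem stmt13 (c1 c2 : ResIdx →₀ ℂ)
    (h : ∀ m : ResIdx, eigenv m * c1 m = eigenv m * c2 m) : c1 = c2 :=
  Finsupp.ext fun m => mul_left_cancel₀ (eigenv_ne_zero m) (h m)
end
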